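/- arXiv:2305.17148 — 3 statements merged into one kernel-verified Lean document; each statement's English description precedes it below -/
import Mathlib

section
/- Fix ε > 0 and integers n, d ≥ 1, and set σ = 3d²/(εn). Consider the randomized mechanism that, on input a dataset X = [X₁,…,Xₙ] with each Xᵢ ∈ [0,1]^d, outputs M̂ = M + A, where M is the centered covariance matrix of X and A is a random symmetric d×d matrix with entries A_ij = A_ji = λ_ij for i < j and A_ii = 2λ_ii, where (λ_ij)_{i≤j} are i.i.d. Laplace Lap(σ) random variables. Then this mechanism is ε-differentially private: for any neighboring datasets X, X' ∈ ([0,1]^d)ⁿ and any measurable set S of symmetric d×d matrices, P(M + A ∈ S) ≤ e^ε · P(M' + A ∈ S). -/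
/-!
Put `D = M - M'`. Since `D` is symmetric it is the noise matrix of the parameter vector
`upperHalf D`, so the event `M + A ∈ S` is the translate by `upperHalf D` of the event
`M' + A ∈ S`. A translation by `t` changes the product Laplace density pointwise by a factor at
most `exp (‖t‖₁ / σ)`, and `‖upperHalf D‖₁ = ½ ∑ |D a c| ≤ d² / (n - 1) ≤ 3 d² / n = ε σ`:
in the pairwise form `M a c = ∑ i j (X i a - X j a) (X i c - X j c) / (2 n (n - 1))` only the
terms in the changed row or column move, each by at most `2`.
-/

open MeasureTheory Matrix
open scoped ENNReal

noncomputable def lap (b : ℝ) : MeasureTheory.Measure ℝ :=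
  MeasureTheory.volume.withDensity fun x => ENNReal.ofReal (Real.exp (-|x| / b) / (2 * b))

instance (b : ℝ) : MeasureTheory.SigmaFinite (lap b) :=
  MeasureTheory.SigmaFinite.withDensity_ofReal _

/-- Two datasets are neighboring if they differ in at most one column. -/
def neighbors {n : ℕ} {α : Type*} (X X' : Fin n → α) : Prop :=
  ∃ k, ∀ i, i ≠ k → X i = X' i

/-- The mean vector of a dataset. -/
noncomputable def meanVec {n d : ℕ} (X : Fin n → Fin d → ℝ) : Fin d → ℝ :=
  fun j => (∑ i, X i j) / n

/-- The centered covariance matrix (as a function of its entries). -/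
noncomputable def covFn {n d : ℕ} (X : Fin n → Fin d → ℝ) : Fin d → Fin d → ℝ :=
  fun a b => (∑ i, (X i a - meanVec X a) * (X i b - meanVec X b)) / ((n : ℝ) - 1)

/-- The symmetric noise matrix built from the i.i.d. family `(ω (i,j))_{i ≤ j}`:
entries `A i j = A j i = ω (i,j)` for `i < j` and `A i i = 2 * ω (i,i)`. -/
noncomputable def noiseFn {d : ℕ} (ω : Fin d × Fin d → ℝ) : Fin d → Fin d → ℝ :=
  fun i j => if i = j then 2 * ω (i, i) else if i < j then ω (i, j) else ω (j, i)

section PiDensity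

variable {ι : Type*} [Fintype ι] {X : ι → Type*} [∀ i, MeasurableSpace (X i)]
  (μ : ∀ i, Measure (X i)) [∀ i, SigmaFinite (μ i)]

theorem lmarginal_prod_apply [DecidableEq ι] (f : ∀ i, X i → ℝ≥0∞)
    (hf : ∀ i, Measurable (f i)) (s : Finset ι) (x : ∀ i, X i) :
    (∫⋯∫⁻_s, (fun y => ∏ i, f i (y i)) ∂μ) x
      = (∏ i ∈ sᶜ, f i (x i)) * ∏ i ∈ s, ∫⁻ y, f i y ∂μ i := by
  induction s using Finset.induction generalizing x with
  | empty => simp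
  | @insert j s hj ih =>
    have hjc : j ∈ sᶜ := Finset.mem_compl.mpr hj
    have hupdate (y : X j) : ∏ i ∈ sᶜ, f i (Function.update x j y i)
        = f j y * ∏ i ∈ sᶜ.erase j, f i (x i) := by
      rw [← Finset.mul_prod_erase _ _ hjc, Function.update_self]
      congr 1
      exact Finset.prod_congr rfl fun i hi => by
        rw [Function.update_of_ne (Finset.ne_of_mem_erase hi)]
    have hmeas : Measurable fun y : ∀ i, X i => ∏ i, f i (y i) :=
      Finset.measurable_prod _ fun i _ => (hf i).comp (measurable_pi_apply i)
    rw [lmarginal_insert _ hmeas hj]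
    simp_rw [ih, hupdate, mul_assoc]
    rw [lintegral_mul_const _ (hf j), Finset.prod_insert hj, Finset.compl_insert]
    ring

theorem lintegral_pi_prod [∀ i, Nonempty (X i)] (f : ∀ i, X i → ℝ≥0∞)
    (hf : ∀ i, Measurable (f i)) :
    ∫⁻ x, ∏ i, f i (x i) ∂Measure.pi μ = ∏ i, ∫⁻ y, f i y ∂μ i := by
  classical
  obtain ⟨x⟩ : Nonempty (∀ i, X i) := inferInstance
  rw [lintegral_eq_lmarginal_univ x, lmarginal_prod_apply μ f hf]
  simp

theorem MeasureTheory.Measure.pi_withDensity [∀ i, Nonempty (X i)] (f : ∀ i, X i → ℝ≥0∞)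
    (hf : ∀ i, Measurable (f i)) [∀ i, SigmaFinite ((μ i).withDensity (f i))] :
    Measure.pi (fun i => (μ i).withDensity (f i))
      = (Measure.pi μ).withDensity fun x => ∏ i, f i (x i) := by
  refine Measure.pi_eq (μ := fun i => (μ i).withDensity (f i)) fun s hs => ?_
  have hbox (x : ∀ i, X i) : (Set.univ.pi s).indicator (fun x => ∏ i, f i (x i)) x
      = ∏ i, (s i).indicator (f i) (x i) := by
    by_cases hx : x ∈ Set.univ.pi s
    · rw [Set.indicator_of_mem hx]
      exact Finset.prod_congr rfl fun i _ =>
        (Set.indicator_of_mem (hx i (Set.mem_univ i)) _).symm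
    · rw [Set.indicator_of_notMem hx]
      obtain ⟨i, hi⟩ : ∃ i, x i ∉ s i := by simpa [Set.mem_univ_pi] using hx
      exact (Finset.prod_eq_zero (Finset.mem_univ i) (Set.indicator_of_notMem hi _)).symm
  rw [withDensity_apply _ (MeasurableSet.univ_pi hs),
    ← lintegral_indicator (MeasurableSet.univ_pi hs)]
  simp_rw [hbox]
  rw [lintegral_pi_prod μ _ fun i => (hf i).indicator (hs i)]
  exact Finset.prod_congr rfl fun i _ => by
    rw [lintegral_indicator (hs i), withDensity_apply _ (hs i)]

end PiDensity

theorem withDensity_preimage_add_le {G : Type*} [MeasurableSpace G] [AddGroup G]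
    [MeasurableAdd G] (μ : Measure G) [μ.IsAddRightInvariant] {F : G → ℝ≥0∞}
    (hFm : Measurable F) {c : ℝ≥0∞} {t : G} (hF : ∀ y, F (y - t) ≤ c * F y) {A : Set G}
    (hA : MeasurableSet A) :
    μ.withDensity F ((· + t) ⁻¹' A) ≤ c * μ.withDensity F A := by
  have hshift (x : G) :
      ((· + t) ⁻¹' A).indicator F x = A.indicator (fun y => F (y - t)) (x + t) := by
    simp only [Set.indicator, add_sub_cancel_right]
    rfl
  calc μ.withDensity F ((· + t) ⁻¹' A)
      = ∫⁻ y, A.indicator (fun y => F (y - t)) y ∂μ := by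
        rw [withDensity_apply _ (hA.preimage (measurable_add_const t)),
          ← lintegral_indicator (hA.preimage (measurable_add_const t))]
        simp_rw [hshift]
        exact lintegral_add_right_eq_self _ t
    _ ≤ ∫⁻ y, A.indicator (fun y => c * F y) y ∂μ :=
        lintegral_mono fun y => Set.indicator_le_indicator (hF y)
    _ = c * μ.withDensity F A := by
        rw [lintegral_indicator hA, lintegral_const_mul _ hFm, withDensity_apply _ hA]

noncomputable def lapDensity (b x : ℝ) : ℝ≥0∞ :=
  ENNReal.ofReal (Real.exp (-|x| / b) / (2 * b))

theorem measurable_lapDensity (b : ℝ) : Measurable (lapDensity b) := by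
  unfold lapDensity
  fun_prop

theorem lapDensity_sub_le {b : ℝ} (hb : 0 ≤ b) (x s : ℝ) :
    lapDensity b (x - s) ≤ ENNReal.ofReal (Real.exp (|s| / b)) * lapDensity b x := by
  rw [lapDensity, lapDensity, ← ENNReal.ofReal_mul (Real.exp_pos _).le, ← mul_div_assoc,
    ← Real.exp_add, ← add_div]
  have : -|x - s| ≤ |s| + -|x| := by linarith [abs_sub_abs_le_abs_sub x s]
  gcongr

theorem pi_lap_preimage_add_le {ι : Type*} [Fintype ι] {b : ℝ} (hb : 0 ≤ b) (t : ι → ℝ)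
    {A : Set (ι → ℝ)} (hA : MeasurableSet A) :
    Measure.pi (fun _ : ι => lap b) ((· + t) ⁻¹' A)
      ≤ ENNReal.ofReal (Real.exp ((∑ i, |t i|) / b)) * Measure.pi (fun _ : ι => lap b) A := by
  have hpi : Measure.pi (fun _ : ι => lap b)
      = volume.withDensity fun x => ∏ i, lapDensity b (x i) := by
    rw [volume_pi]
    exact Measure.pi_withDensity _ _ fun _ => measurable_lapDensity b
  rw [hpi]
  refine withDensity_preimage_add_le volume
    (Finset.measurable_prod _ fun i _ => (measurable_lapDensity b).comp (measurable_pi_apply i))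
    (fun y => ?_) hA
  calc ∏ i, lapDensity b ((y - t) i)
      ≤ ∏ i, ENNReal.ofReal (Real.exp (|t i| / b)) * lapDensity b (y i) :=
        Finset.prod_le_prod' fun i _ => lapDensity_sub_le hb (y i) (t i)
    _ = ENNReal.ofReal (Real.exp ((∑ i, |t i|) / b)) * ∏ i, lapDensity b (y i) := by
        rw [Finset.prod_mul_distrib,
          ← ENNReal.ofReal_prod_of_nonneg fun i _ => (Real.exp_pos _).le, ← Real.exp_sum,
          Finset.sum_div]

theorem covFn_comm {n d : ℕ} (X : Fin n → Fin d → ℝ) (a c : Fin d) :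
    covFn X a c = covFn X c a := by
  simp only [covFn, mul_comm]

theorem sum_sum_sub_mul_sub {ι : Type*} [Fintype ι] (x y : ι → ℝ) :
    ∑ i, ∑ j, (x i - x j) * (y i - y j)
      = 2 * Fintype.card ι
          * ∑ i, (x i - (∑ j, x j) / Fintype.card ι) * (y i - (∑ j, y j) / Fintype.card ι) := by
  rcases isEmpty_or_nonempty ι with hι | hι
  · simp
  have hN : (Fintype.card ι : ℝ) ≠ 0 := Nat.cast_ne_zero.mpr Fintype.card_ne_zero
  simp only [sub_mul, mul_sub, Finset.sum_sub_distrib, Finset.sum_const, Finset.card_univ,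
    nsmul_eq_mul, ← Finset.mul_sum, ← Finset.sum_mul]
  field_simp
  ring

theorem covFn_eq_sum_sum {n d : ℕ} (X : Fin n → Fin d → ℝ) (a c : Fin d) :
    covFn X a c
      = (∑ i, ∑ j, (X i a - X j a) * (X i c - X j c)) / (2 * n * ((n : ℝ) - 1)) := by
  rcases Nat.eq_zero_or_pos n with rfl | hn
  · simp [covFn]
  rw [sum_sum_sub_mul_sub, Fintype.card_fin, mul_div_mul_left _ _ (by positivity)]
  rfl

theorem abs_sub_mul_sub_le_one {u v u' v' : ℝ} (hu : u ∈ Set.Icc (0 : ℝ) 1)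
    (hv : v ∈ Set.Icc (0 : ℝ) 1) (hu' : u' ∈ Set.Icc (0 : ℝ) 1) (hv' : v' ∈ Set.Icc (0 : ℝ) 1) :
    |(u - v) * (u' - v')| ≤ 1 := by
  have h : |u - v| ≤ 1 := abs_le.mpr ⟨by linarith [hu.1, hv.2], by linarith [hu.2, hv.1]⟩
  have h' : |u' - v'| ≤ 1 := abs_le.mpr ⟨by linarith [hu'.1, hv'.2], by linarith [hu'.2, hv'.1]⟩
  rw [abs_mul, ← one_mul 1]
  exact mul_le_mul h h' (abs_nonneg _) zero_le_one

theorem abs_sum_sum_sub_le_of_eq_off {ι : Type*} [Fintype ι] {F F' : ι → ι → ℝ} (k : ι)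
    (hF : ∀ i j, |F i j| ≤ 1) (hF' : ∀ i j, |F' i j| ≤ 1)
    (heq : ∀ i j, i ≠ k → j ≠ k → F i j = F' i j) :
    |∑ i, ∑ j, F i j - ∑ i, ∑ j, F' i j| ≤ 4 * Fintype.card ι := by
  classical
  have hterm (i j : ι) :
      |F i j - F' i j| ≤ (if i = k then 2 else 0) + (if j = k then 2 else 0) := by
    have h2 : |F i j - F' i j| ≤ 2 := (abs_sub _ _).trans (by linarith [hF i j, hF' i j])
    by_cases hi : i = k
    · rw [if_pos hi]
      split_ifs <;> linarith
    by_cases hj : j = k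
    · rw [if_neg hi, if_pos hj]
      linarith
    · simp [hi, hj, heq i j hi hj]
  calc |∑ i, ∑ j, F i j - ∑ i, ∑ j, F' i j|
      = |∑ i, ∑ j, (F i j - F' i j)| := by simp only [Finset.sum_sub_distrib]
    _ ≤ ∑ i, ∑ j, |F i j - F' i j| :=
        (Finset.abs_sum_le_sum_abs _ _).trans
          (Finset.sum_le_sum fun i _ => Finset.abs_sum_le_sum_abs _ _)
    _ ≤ ∑ i, ∑ j, ((if i = k then 2 else 0) + (if j = k then 2 else 0)) :=
        Finset.sum_le_sum fun i _ => Finset.sum_le_sum fun j _ => hterm i j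
    _ = 4 * Fintype.card ι := by
        simp [Finset.sum_add_distrib]
        ring

theorem abs_covFn_sub_le {n d : ℕ} (hn : 1 ≤ n) {X X' : Fin n → Fin d → ℝ}
    (hX : ∀ i j, X i j ∈ Set.Icc (0 : ℝ) 1) (hX' : ∀ i j, X' i j ∈ Set.Icc (0 : ℝ) 1)
    (hXX' : neighbors X X') (a c : Fin d) :
    |covFn X a c - covFn X' a c| ≤ 2 / ((n : ℝ) - 1) := by
  obtain ⟨k, hk⟩ := hXX'
  have hsum := abs_sum_sum_sub_le_of_eq_off k
    (F := fun i j => (X i a - X j a) * (X i c - X j c))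
    (F' := fun i j => (X' i a - X' j a) * (X' i c - X' j c))
    (fun i j => abs_sub_mul_sub_le_one (hX i a) (hX j a) (hX i c) (hX j c))
    (fun i j => abs_sub_mul_sub_le_one (hX' i a) (hX' j a) (hX' i c) (hX' j c))
    (fun i j hi hj => by simp only [hk i hi, hk j hj])
  have hn0 : (1 : ℝ) ≤ n := by exact_mod_cast hn
  have hden : 0 ≤ 2 * (n : ℝ) * ((n : ℝ) - 1) := by nlinarith
  rw [covFn_eq_sum_sum, covFn_eq_sum_sum, ← sub_div, abs_div, abs_of_nonneg hden]
  calc _ ≤ 4 * (n : ℝ) / (2 * n * ((n : ℝ) - 1)) := by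
        gcongr
        simpa using hsum
    _ = 2 / ((n : ℝ) - 1) := by
        rw [show 4 * (n : ℝ) = 2 * n * 2 by ring, mul_div_mul_left _ _ (by positivity)]

noncomputable def upperHalf {d : ℕ} (D : Fin d → Fin d → ℝ) : Fin d × Fin d → ℝ :=
  fun e => if e.1 = e.2 then D e.1 e.1 / 2 else if e.1 < e.2 then D e.1 e.2 else 0

theorem noiseFn_add {d : ℕ} (ω ω' : Fin d × Fin d → ℝ) :
    noiseFn (ω + ω') = noiseFn ω + noiseFn ω' := by
  ext i j
  simp only [noiseFn, Pi.add_apply]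
  split_ifs <;> ring

theorem noiseFn_upperHalf {d : ℕ} {D : Fin d → Fin d → ℝ} (hD : ∀ i j, D i j = D j i) :
    noiseFn (upperHalf D) = D := by
  ext i j
  rcases lt_trichotomy i j with h | rfl | h
  · simp [noiseFn, upperHalf, h, h.ne]
  · simp only [noiseFn, upperHalf, if_true]
    ring
  · simp [noiseFn, upperHalf, h, h.ne, h.ne', h.not_gt, hD i j]

theorem sum_abs_upperHalf {d : ℕ} {D : Fin d → Fin d → ℝ} (hD : ∀ i j, D i j = D j i) :
    ∑ e, |upperHalf D e| = (∑ i, ∑ j, |D i j|) / 2 := by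
  have hpair (i j : Fin d) : |upperHalf D (i, j)| + |upperHalf D (j, i)| = |D i j| := by
    rcases lt_trichotomy i j with h | rfl | h
    · simp [upperHalf, h, h.ne, h.ne', h.not_gt]
    · simp [upperHalf, abs_div]
    · simp [upperHalf, h, h.ne, h.ne', h.not_gt, hD i j]
  rw [eq_div_iff two_ne_zero, Fintype.sum_prod_type, mul_two]
  nth_rewrite 2 [Finset.sum_comm]
  simp only [← Finset.sum_add_distrib, hpair]

theorem measurable_noiseFn {d : ℕ} : Measurable (noiseFn (d := d)) := by
  refine measurable_pi_lambda _ fun i => measurable_pi_lambda _ fun j => ?_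
  simp only [noiseFn]
  split_ifs <;> fun_prop

theorem stmt_0_general (d n : ℕ) (hn : 1 ≤ n) (ε : ℝ) (hε : 0 < ε)
    (X X' : Fin n → Fin d → ℝ)
    (hX : ∀ i j, X i j ∈ Set.Icc (0 : ℝ) 1) (hX' : ∀ i j, X' i j ∈ Set.Icc (0 : ℝ) 1)
    (hXX' : neighbors X X')
    (S : Set (Fin d → Fin d → ℝ)) (hS : MeasurableSet S) :
    (MeasureTheory.Measure.pi fun _ : Fin d × Fin d => lap (3 * d ^ 2 / (ε * n)))
        {ω | covFn X + noiseFn ω ∈ S}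
      ≤ ENNReal.ofReal (Real.exp ε) *
        (MeasureTheory.Measure.pi fun _ : Fin d × Fin d => lap (3 * d ^ 2 / (ε * n)))
          {ω | covFn X' + noiseFn ω ∈ S} := by
  set D := covFn X - covFn X'
  have hD : ∀ a c, D a c = D c a := by
    intro a c
    simp only [D, Pi.sub_apply, covFn_comm X a c, covFn_comm X' a c]
  have hpre : {ω | covFn X + noiseFn ω ∈ S}
      = (· + upperHalf D) ⁻¹' {ω | covFn X' + noiseFn ω ∈ S} := by
    ext ω
    simp only [Set.mem_ofPred_eq, Set.mem_preimage, noiseFn_add, noiseFn_upperHalf hD, D]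
    congr! 1
    abel
  have hsens : ∑ e, |upperHalf D e| ≤ ε * (3 * d ^ 2 / (ε * n)) := calc
    ∑ e, |upperHalf D e| = (∑ a, ∑ c, |D a c|) / 2 := sum_abs_upperHalf hD
    _ ≤ (∑ _a : Fin d, ∑ _c : Fin d, 2 / ((n : ℝ) - 1)) / 2 := by
        gcongr with a _ c _
        exact abs_covFn_sub_le hn hX hX' hXX' a c
    _ = d ^ 2 / ((n : ℝ) - 1) := by
        simp only [Finset.sum_const, Finset.card_univ, Fintype.card_fin, nsmul_eq_mul]
        ring
    _ ≤ 3 * d ^ 2 / n := by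
        rcases hn.eq_or_lt with rfl | h
        -- for `n = 1` the division by `n - 1 = 0` makes the left side `0`
        · simp only [Nat.cast_one, sub_self, div_zero]
          positivity
        · have h2 : (2 : ℝ) ≤ n := by exact_mod_cast h
          rw [div_le_div_iff₀ (by linarith) (by linarith)]
          nlinarith [sq_nonneg (d : ℝ)]
    _ = ε * (3 * d ^ 2 / (ε * n)) := by field_simp
  have hA : MeasurableSet {ω | covFn X' + noiseFn ω ∈ S} :=
    (measurable_const.add measurable_noiseFn) hS
  rw [hpre]
  refine (pi_lap_preimage_add_le (by positivity) _ hA).trans ?_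
  gcongr
  exact div_le_of_le_mul₀ (by positivity) hε.le hsens

theorem stmt_0 (d n : ℕ) (hd : 1 ≤ d) (hn : 1 ≤ n) (ε : ℝ) (hε : 0 < ε)
    (X X' : Fin n → Fin d → ℝ)
    (hX : ∀ i j, X i j ∈ Set.Icc (0 : ℝ) 1) (hX' : ∀ i j, X' i j ∈ Set.Icc (0 : ℝ) 1)
    (hXX' : neighbors X X')
    (S : Set (Fin d → Fin d → ℝ)) (hS : MeasurableSet S) :
    (MeasureTheory.Measure.pi fun _ : Fin d × Fin d => lap (3 * d ^ 2 / (ε * n)))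
        {ω | covFn X + noiseFn ω ∈ S}
      ≤ ENNReal.ofReal (Real.exp ε) *
        (MeasureTheory.Measure.pi fun _ : Fin d × Fin d => lap (3 * d ^ 2 / (ε * n)))
          {ω | covFn X' + noiseFn ω ∈ S} :=
  stmt_0_general d n hn ε hε X X' hX hX' hXX' S hS
end

section
/- Let n ≥ 2 and let X, X' ∈ ([0,1]^d)ⁿ be neighboring datasets (differing in exactly one column), with centered covariance matrices M and M' respectively. Then for every pair of indices (i, j), |M_ij − M'_ij| ≤ 6/n; consequently Σ_{i,j} |M_ij − M'_ij| ≤ 6d²/n. -/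
open MeasureTheory Matrix
open scoped ENNReal

/-! Replacing one sample changes each of `∑ xₐ x_b`, `∑ xₐ`, `∑ x_b` by at most 1, and the latter
two sums lie in `[0, n]`. Since the co-moment equals `∑ xₐ x_b - (∑ xₐ)(∑ x_b) / n`, it changes
by at most `1 + (1 · n + n · 1) / n = 3`, and `3 / (n - 1) ≤ 6 / n` once `n ≥ 2`. -/

theorem Fintype.sum_sub_sum_eq_of_eq_off {ι G : Type*} [Fintype ι] [AddCommGroup G]
    {f g : ι → G} (k : ι) (h : ∀ i, i ≠ k → f i = g i) :
    ∑ i, f i - ∑ i, g i = f k - g k := by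
  rw [← Finset.sum_sub_distrib, Fintype.sum_eq_single k fun i hi => by rw [h i hi, sub_self]]

noncomputable def comoment {n : ℕ} (u v : Fin n → ℝ) : ℝ :=
  ∑ i, (u i - (∑ j, u j) / n) * (v i - (∑ j, v j) / n)

theorem comoment_eq {n : ℕ} (u v : Fin n → ℝ) :
    comoment u v = ∑ i, u i * v i - (∑ i, u i) * (∑ i, v i) / n := by
  rcases Nat.eq_zero_or_pos n with rfl | hpos
  · simp [comoment]
  have hn : (n : ℝ) ≠ 0 := by positivity
  simp only [comoment, sub_mul, mul_sub, Finset.sum_sub_distrib, ← Finset.sum_mul,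
    ← Finset.mul_sum, Finset.sum_const, Finset.card_univ, Fintype.card_fin, nsmul_eq_mul]
  field_simp
  ring

theorem covFn_eq_comoment {n d : ℕ} (X : Fin n → Fin d → ℝ) (a b : Fin d) :
    covFn X a b = comoment (X · a) (X · b) / ((n : ℝ) - 1) :=
  rfl

section NeighboringSums

variable {n : ℕ} {u v u' v' : Fin n → ℝ}

theorem abs_sum_le_of_mem_unitInterval (hu : ∀ i, u i ∈ Set.Icc (0 : ℝ) 1) :
    |∑ i, u i| ≤ n := by
  rw [abs_of_nonneg (Finset.sum_nonneg fun i _ => (hu i).1)]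
  simpa using Finset.sum_le_card_nsmul Finset.univ u 1 fun i _ => (hu i).2

theorem abs_sum_sub_sum_le_one_of_eq_off (k : Fin n) (hu : ∀ i, u i ∈ Set.Icc (0 : ℝ) 1)
    (hu' : ∀ i, u' i ∈ Set.Icc (0 : ℝ) 1) (h : ∀ i, i ≠ k → u i = u' i) :
    |∑ i, u i - ∑ i, u' i| ≤ 1 := by
  rw [Fintype.sum_sub_sum_eq_of_eq_off k h]
  exact abs_sub_le_of_nonneg_of_le (hu k).1 (hu k).2 (hu' k).1 (hu' k).2

theorem abs_sum_mul_sum_sub_sum_mul_sum_le_of_eq_off (k : Fin n)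
    (hu : ∀ i, u i ∈ Set.Icc (0 : ℝ) 1) (hv : ∀ i, v i ∈ Set.Icc (0 : ℝ) 1)
    (hu' : ∀ i, u' i ∈ Set.Icc (0 : ℝ) 1) (hv' : ∀ i, v' i ∈ Set.Icc (0 : ℝ) 1)
    (huu' : ∀ i, i ≠ k → u i = u' i) (hvv' : ∀ i, i ≠ k → v i = v' i) :
    |(∑ i, u i) * ∑ i, v i - (∑ i, u' i) * ∑ i, v' i| ≤ 2 * n := by
  have hsplit : (∑ i, u i) * ∑ i, v i - (∑ i, u' i) * ∑ i, v' i =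
      (∑ i, u i - ∑ i, u' i) * ∑ i, v i + (∑ i, u' i) * (∑ i, v i - ∑ i, v' i) := by ring
  calc |(∑ i, u i) * ∑ i, v i - (∑ i, u' i) * ∑ i, v' i|
      ≤ |∑ i, u i - ∑ i, u' i| * |∑ i, v i| + |∑ i, u' i| * |∑ i, v i - ∑ i, v' i| := by
        rw [hsplit, ← abs_mul, ← abs_mul]; exact abs_add_le _ _
    _ ≤ 1 * n + n * 1 := by
        gcongr
        · exact abs_sum_sub_sum_le_one_of_eq_off k hu hu' huu'
        · exact abs_sum_le_of_mem_unitInterval hv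
        · exact abs_sum_le_of_mem_unitInterval hu'
        · exact abs_sum_sub_sum_le_one_of_eq_off k hv hv' hvv'
    _ = 2 * n := by ring

theorem abs_comoment_sub_comoment_le_of_eq_off (k : Fin n)
    (hu : ∀ i, u i ∈ Set.Icc (0 : ℝ) 1) (hv : ∀ i, v i ∈ Set.Icc (0 : ℝ) 1)
    (hu' : ∀ i, u' i ∈ Set.Icc (0 : ℝ) 1) (hv' : ∀ i, v' i ∈ Set.Icc (0 : ℝ) 1)
    (huu' : ∀ i, i ≠ k → u i = u' i) (hvv' : ∀ i, i ≠ k → v i = v' i) :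
    |comoment u v - comoment u' v'| ≤ 3 := by
  have hprod : |∑ i, u i * v i - ∑ i, u' i * v' i| ≤ 1 :=
    abs_sum_sub_sum_le_one_of_eq_off k (fun i => unitInterval.mul_mem (hu i) (hv i))
      (fun i => unitInterval.mul_mem (hu' i) (hv' i)) fun i hi => by rw [huu' i hi, hvv' i hi]
  have hsums : |(∑ i, u i) * ∑ i, v i - (∑ i, u' i) * ∑ i, v' i| / n ≤ 2 :=
    div_le_of_le_mul₀ n.cast_nonneg zero_le_two
      (abs_sum_mul_sum_sub_sum_mul_sum_le_of_eq_off k hu hv hu' hv' huu' hvv')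
  rw [comoment_eq, comoment_eq, sub_sub_sub_comm, ← sub_div]
  calc _ ≤ |∑ i, u i * v i - ∑ i, u' i * v' i|
        + |(∑ i, u i) * ∑ i, v i - (∑ i, u' i) * ∑ i, v' i| / n :=
        (abs_sub _ _).trans_eq (by rw [abs_div, Nat.abs_cast])
    _ ≤ 3 := by linarith

end NeighboringSums

theorem abs_covFn_sub_covFn_le {n d : ℕ} (hn : 2 ≤ n) {X X' : Fin n → Fin d → ℝ}
    (hX : ∀ i j, X i j ∈ Set.Icc (0 : ℝ) 1) (hX' : ∀ i j, X' i j ∈ Set.Icc (0 : ℝ) 1)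
    (hXX' : neighbors X X') (a b : Fin d) :
    |covFn X a b - covFn X' a b| ≤ 6 / n := by
  obtain ⟨k, hk⟩ := hXX'
  have hnR : (2 : ℝ) ≤ n := by exact_mod_cast hn
  have hcomoment := abs_comoment_sub_comoment_le_of_eq_off k (hX · a) (hX · b) (hX' · a)
    (hX' · b) (fun i hi => by rw [hk i hi]) (fun i hi => by rw [hk i hi])
  rw [covFn_eq_comoment, covFn_eq_comoment, ← sub_div, abs_div,
    abs_of_pos (by linarith : (0 : ℝ) < n - 1)]
  calc _ ≤ 3 / ((n : ℝ) - 1) := by gcongr; linarith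
    _ ≤ 6 / n := by rw [div_le_div_iff₀ (by linarith) (by linarith)]; linarith

theorem stmt_1 (d n : ℕ) (hn : 2 ≤ n) (X X' : Fin n → Fin d → ℝ)
    (hX : ∀ i j, X i j ∈ Set.Icc (0 : ℝ) 1) (hX' : ∀ i j, X' i j ∈ Set.Icc (0 : ℝ) 1)
    (hXX' : neighbors X X') :
    (∀ a b, |covFn X a b - covFn X' a b| ≤ 6 / n) ∧
      (∑ a, ∑ b, |covFn X a b - covFn X' a b|) ≤ 6 * d ^ 2 / n := by
  have hentry := abs_covFn_sub_covFn_le hn hX hX' hXX'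
  refine ⟨hentry, ?_⟩
  calc ∑ a, ∑ b, |covFn X a b - covFn X' a b| ≤ ∑ _a : Fin d, ∑ _b : Fin d, (6 / n : ℝ) :=
        Finset.sum_le_sum fun a _ => Finset.sum_le_sum fun b _ => hentry a b
    _ = 6 * d ^ 2 / n := by
        simp only [Finset.sum_const, Finset.card_univ, Fintype.card_fin, nsmul_eq_mul]
        ring
end

section
/- (Stability of noisy projection.) Let X be a d×n real matrix and A a d×d real symmetric matrix. Let M = (1/n)XXᵀ with eigenvalues σ₁ ≥ σ₂ ≥ … ≥ σ_d, let M̂ = M + A, and let v̂₁,…,v̂_{d'} be orthonormal eigenvectors of M̂ corresponding to its d' largest eigenvalues; set V̂ = [v̂₁,…,v̂_{d'}] and Y = V̂ V̂ᵀ X. Then (1/n)‖X − Y‖_F² ≤ Σ_{i > d'} σᵢ + 2d'‖A‖, where ‖A‖ denotes the operator norm and ‖·‖_F the Frobenius norm. No spectral-gap assumption on M is required. -/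
open MeasureTheory Matrix
open scoped ENNReal

/-- The squared Frobenius norm of a matrix. -/
noncomputable def frobSq {m n : ℕ} (B : Matrix (Fin m) (Fin n) ℝ) : ℝ := ∑ i, ∑ j, B i j ^ 2

/-- The operator (spectral) norm of a square matrix. -/
noncomputable def opNorm {d : ℕ} (A : Matrix (Fin d) (Fin d) ℝ) : ℝ :=
  ‖Matrix.toEuclideanCLM (𝕜 := ℝ) A‖

/-- A family of vectors in `ℝ^d` is orthonormal (with respect to the Euclidean inner product). -/
def OrthonormalFamily {κ : Type*} [DecidableEq κ] {d : ℕ} (v : κ → Fin d → ℝ) : Prop :=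
  ∀ i j, v i ⬝ᵥ v j = if i = j then (1 : ℝ) else 0

/-! Write `M = XXᵀ/n` and `M̂ = M + A`; let `P` and `Q` be the orthogonal projections onto the span
of `v̂₁, …, v̂_{d'}` and of `v₁, …, v_{d'}`. Then `‖X - PX‖_F² / n = tr M - tr (PMP)` and
`tr (PMP) = tr (PM̂P) - tr (PAP) ≥ tr (QM̂Q) - tr (PAP) = tr (QMQ) + tr (QAQ) - tr (PAP)`,
which is at least `σ₁ + ⋯ + σ_{d'} - 2d'‖A‖`. The `≥` step is Ky Fan's maximum principle:
in the eigenbasis of `M̂`, `tr (QM̂Q) = ∑ σ̂ᵢ cᵢ` with weights `0 ≤ cᵢ ≤ 1` summing to `d'`, and such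
a sum is largest when the weight sits on the `d'` largest eigenvalues, giving `tr (PM̂P)`. -/

open Finset

namespace OrthonormalFamily

variable {κ ι : Type*} [DecidableEq κ] [DecidableEq ι] {d : ℕ} {v : κ → Fin d → ℝ}

lemma comp (hv : OrthonormalFamily v) {e : ι → κ} (he : Function.Injective e) :
    OrthonormalFamily (v ∘ e) := fun i j => by
  simp only [Function.comp_apply, hv (e i) (e j), he.eq_iff]

lemma mul_transpose_eq_one (hv : OrthonormalFamily v) : of v * (of v)ᵀ = 1 := by
  ext i j
  simpa [mul_apply, dotProduct, one_apply] using hv i j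

end OrthonormalFamily

section Spectral

variable {m k : Type*} [Fintype m] [Fintype k] [DecidableEq k]

lemma mul_transpose_of_eq_of_mulVec_eq_smul {M : Matrix m m ℝ} {w : k → m → ℝ} {μ : k → ℝ}
    (hw : ∀ j, M *ᵥ w j = μ j • w j) : M * (of w)ᵀ = (of w)ᵀ * diagonal μ := by
  ext i j
  rw [mul_diagonal]
  simpa [mul_apply, mulVec, dotProduct, mul_comm] using congrFun (hw j) i

lemma eq_transpose_mul_diagonal_mul {M F : Matrix k k ℝ} {μ : k → ℝ} (hF : F * Fᵀ = 1)
    (hM : M * Fᵀ = Fᵀ * diagonal μ) : M = Fᵀ * diagonal μ * F := by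
  rw [← hM, Matrix.mul_assoc, mul_eq_one_comm.mp hF, Matrix.mul_one]

lemma trace_mul_mul_transpose_eq_sum {M : Matrix m m ℝ} {R : Matrix k m ℝ} {μ : k → ℝ}
    (hR : R * Rᵀ = 1) (hM : M * Rᵀ = Rᵀ * diagonal μ) : trace (R * M * Rᵀ) = ∑ j, μ j := by
  rw [Matrix.mul_assoc, hM, ← Matrix.mul_assoc, hR, Matrix.one_mul, trace_diagonal]

lemma trace_eq_sum_of_mul_transpose_eq {M F : Matrix k k ℝ} {μ : k → ℝ} (hF : F * Fᵀ = 1)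
    (hM : M * Fᵀ = Fᵀ * diagonal μ) : trace M = ∑ j, μ j := by
  rw [← trace_mul_mul_transpose_eq_sum hF hM, trace_mul_cycle, mul_eq_one_comm.mp hF,
    Matrix.one_mul]

end Spectral

lemma abs_dotProduct_mulVec_le {d : ℕ} (A : Matrix (Fin d) (Fin d) ℝ) (u : Fin d → ℝ) :
    |u ⬝ᵥ A *ᵥ u| ≤ opNorm A * (u ⬝ᵥ u) := by
  set x : EuclideanSpace ℝ (Fin d) := WithLp.toLp 2 u
  have hx : u ⬝ᵥ u = ‖x‖ ^ 2 := by
    rw [← real_inner_self_eq_norm_sq, EuclideanSpace.inner_eq_star_dotProduct]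
    simp [x]
  calc |u ⬝ᵥ A *ᵥ u| = |inner ℝ x (toEuclideanCLM (𝕜 := ℝ) A x)| := by rw [inner_toEuclideanCLM]
    _ ≤ ‖x‖ * ‖toEuclideanCLM (𝕜 := ℝ) A x‖ := abs_real_inner_le_norm _ _
    _ ≤ ‖x‖ * (opNorm A * ‖x‖) := by gcongr; exact (toEuclideanCLM (𝕜 := ℝ) A).le_opNorm x
    _ = opNorm A * (u ⬝ᵥ u) := by rw [hx]; ring

lemma abs_trace_mul_mul_transpose_le {k : Type*} [Fintype k] [DecidableEq k] {d : ℕ}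
    (A : Matrix (Fin d) (Fin d) ℝ) {R : Matrix k (Fin d) ℝ} (hR : R * Rᵀ = 1) :
    |trace (R * A * Rᵀ)| ≤ Fintype.card k * opNorm A := by
  have hdiag : ∀ j, (R * A * Rᵀ) j j = R j ⬝ᵥ A *ᵥ R j := fun j => by
    simp only [mul_apply, transpose_apply, dotProduct, mulVec, sum_mul, mul_sum]
    rw [sum_comm]
    exact sum_congr rfl fun _ _ => sum_congr rfl fun _ _ => by ring
  have hunit : ∀ j, R j ⬝ᵥ R j = 1 := fun j => by
    simpa [mul_apply, dotProduct] using congrFun (congrFun hR j) j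
  calc |trace (R * A * Rᵀ)| = |∑ j, R j ⬝ᵥ A *ᵥ R j| := by simp only [trace, Matrix.diag, hdiag]
    _ ≤ ∑ j, |R j ⬝ᵥ A *ᵥ R j| := abs_sum_le_sum_abs _ _
    _ ≤ ∑ _j : k, opNorm A := sum_le_sum fun j _ => by
        simpa [hunit j] using abs_dotProduct_mulVec_le A (R j)
    _ = Fintype.card k * opNorm A := by simp

section Projection

variable {m k : Type*} [Fintype k]

lemma mul_transpose_diag_nonneg (G : Matrix m k ℝ) (i : m) : 0 ≤ (G * Gᵀ) i i :=
  sum_nonneg fun _ _ => mul_self_nonneg _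

lemma mul_transpose_diag_le_one [Fintype m] [DecidableEq k] {G : Matrix m k ℝ} (hG : Gᵀ * G = 1)
    (i : m) : (G * Gᵀ) i i ≤ 1 := by
  set P := G * Gᵀ
  have hPP : P * P = P := by
    rw [Matrix.mul_assoc, ← Matrix.mul_assoc Gᵀ, hG, Matrix.one_mul]
  have hsq : P i i ^ 2 ≤ P i i := calc
    P i i ^ 2 ≤ ∑ j, P i j ^ 2 := single_le_sum (f := fun j => P i j ^ 2)
        (fun _ _ => sq_nonneg _) (mem_univ i)
    _ = ∑ j, P i j * P j i := sum_congr rfl fun j _ => by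
        rw [sq]; congr 1; simp only [P, mul_apply, transpose_apply, mul_comm]
    _ = P i i := by rw [← mul_apply, hPP]
  nlinarith [mul_transpose_diag_nonneg G i]

end Projection

lemma sum_mul_le_sum_of_separated {ι : Type*} [Fintype ι] [DecidableEq ι] (S : Finset ι)
    {s c : ι → ℝ} (hs : ∀ i ∈ S, ∀ j ∉ S, s j ≤ s i) (hc0 : ∀ i, 0 ≤ c i)
    (hc1 : ∀ i, c i ≤ 1) (hsum : ∑ i, c i = #S) : ∑ i, s i * c i ≤ ∑ i ∈ S, s i := by
  rcases S.eq_empty_or_nonempty with rfl | hne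
  · have hc : ∀ i, c i = 0 := fun i =>
      (sum_eq_zero_iff_of_nonneg fun i _ => hc0 i).mp (by simpa using hsum) i (mem_univ i)
    simp [hc]
  set t := S.inf' hne s
  have hle : ∀ i ∈ S, t ≤ s i := fun i hi => inf'_le s hi
  have hge : ∀ j ∉ S, s j ≤ t := fun j hj => le_inf' hne s fun i hi => hs i hi j hj
  calc ∑ i, s i * c i = ∑ i, (s i - t) * c i + t * #S := by
        rw [← hsum, mul_sum, ← sum_add_distrib]
        exact sum_congr rfl fun _ _ => by ring
    _ = ∑ i ∈ S, (s i - t) * c i + ∑ i ∈ Sᶜ, (s i - t) * c i + t * #S := by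
        rw [sum_add_sum_compl]
    _ ≤ ∑ i ∈ S, (s i - t) + 0 + t * #S := by
        gcongr with i hi
        · exact mul_le_of_le_one_right (sub_nonneg.mpr (hle i hi)) (hc1 i)
        · exact sum_nonpos fun j hj =>
            mul_nonpos_of_nonpos_of_nonneg (sub_nonpos.mpr (hge j (mem_compl.mp hj))) (hc0 j)
    _ = ∑ i ∈ S, s i := by rw [sum_sub_distrib, sum_const, nsmul_eq_mul]; ring

lemma Fin.sum_filter_val_lt {β : Type*} [AddCommMonoid β] {k d : ℕ} (hk : k ≤ d)
    (f : Fin d → β) :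
    ∑ i ∈ univ.filter (fun i : Fin d => i.val < k), f i = ∑ j : Fin k, f (Fin.castLE hk j) := by
  have : univ.filter (fun i : Fin d => i.val < k) = univ.map (Fin.castLEEmb hk) := by
    ext i
    simp only [mem_filter, mem_univ, true_and, mem_map, Fin.castLEEmb_apply]
    exact ⟨fun h => ⟨⟨i, h⟩, rfl⟩, by rintro ⟨j, rfl⟩; exact j.isLt⟩
  rw [this, sum_map]
  rfl

lemma Fin.sum_eq_sum_castLE_add_sum_filter {β : Type*} [AddCommMonoid β] {k d : ℕ} (hk : k ≤ d)
    (f : Fin d → β) :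
    ∑ i, f i
      = ∑ j : Fin k, f (Fin.castLE hk j) + ∑ i ∈ univ.filter (fun i : Fin d => k ≤ i.val), f i := by
  rw [← Fin.sum_filter_val_lt hk, ← sum_filter_add_sum_filter_not univ (fun i : Fin d => i.val < k)]
  simp only [not_lt]

lemma sum_mul_le_sum_castLE {k d : ℕ} (hk : k ≤ d) {s c : Fin d → ℝ} (hs : Antitone s)
    (hc0 : ∀ i, 0 ≤ c i) (hc1 : ∀ i, c i ≤ 1) (hsum : ∑ i, c i = k) :
    ∑ i, s i * c i ≤ ∑ j : Fin k, s (Fin.castLE hk j) := by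
  rw [← Fin.sum_filter_val_lt hk]
  refine sum_mul_le_sum_of_separated _ (fun i hi j hj => hs ?_) hc0 hc1 ?_
  · simp only [mem_filter, mem_univ, true_and, not_lt] at hi hj
    exact Fin.le_def.mpr (by omega)
  · rw [hsum, Fin.card_filter_val_lt, min_eq_right hk]

lemma trace_mul_mul_transpose_le_sum_castLE {k d : ℕ} (hk : k ≤ d)
    {M F : Matrix (Fin d) (Fin d) ℝ} {s : Fin d → ℝ} (hF : F * Fᵀ = 1)
    (hM : M * Fᵀ = Fᵀ * diagonal s) (hs : Antitone s) {R : Matrix (Fin k) (Fin d) ℝ}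
    (hR : R * Rᵀ = 1) : trace (R * M * Rᵀ) ≤ ∑ j : Fin k, s (Fin.castLE hk j) := by
  -- the rows of `G` are the coordinates of the rows of `R` in the eigenbasis `F`
  set G := F * Rᵀ
  have hG : Gᵀ * G = 1 := by
    rw [transpose_mul, transpose_transpose, Matrix.mul_assoc, ← Matrix.mul_assoc Fᵀ,
      mul_eq_one_comm.mp hF, Matrix.one_mul, hR]
  have htrace : trace (R * M * Rᵀ) = ∑ i, s i * (G * Gᵀ) i i := by
    have hconj : R * (Fᵀ * diagonal s * F) * Rᵀ = Gᵀ * diagonal s * G := by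
      simp only [G, transpose_mul, transpose_transpose, Matrix.mul_assoc]
    rw [eq_transpose_mul_diagonal_mul hF hM, hconj, trace_mul_cycle]
    simp only [trace, Matrix.diag, mul_diagonal, mul_comm]
  have hweights : ∑ i, (G * Gᵀ) i i = k := by
    change trace (G * Gᵀ) = k
    rw [trace_mul_comm, hG, trace_one, Fintype.card_fin]
  rw [htrace]
  exact sum_mul_le_sum_castLE hk hs (mul_transpose_diag_nonneg G) (mul_transpose_diag_le_one hG)
    hweights

lemma frobSq_eq_trace {m n : ℕ} (B : Matrix (Fin m) (Fin n) ℝ) : frobSq B = trace (B * Bᵀ) := by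
  simp [frobSq, trace, mul_apply, sq]

lemma frobSq_sub_transpose_mul_mul {k : Type*} [Fintype k] [DecidableEq k] {m n : ℕ}
    {R : Matrix k (Fin m) ℝ} (hR : R * Rᵀ = 1) (X : Matrix (Fin m) (Fin n) ℝ) :
    frobSq (X - Rᵀ * R * X) = trace (X * Xᵀ) - trace (R * (X * Xᵀ) * Rᵀ) := by
  set P := Rᵀ * R
  have hPP : P * P = P := by rw [Matrix.mul_assoc, ← Matrix.mul_assoc R, hR, Matrix.one_mul]
  have hP : (1 - P)ᵀ * (1 - P) = 1 - P := by
    rw [transpose_sub, transpose_one, transpose_mul, transpose_transpose, Matrix.sub_mul,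
      Matrix.mul_sub, Matrix.mul_sub, hPP, Matrix.one_mul, Matrix.mul_one, Matrix.one_mul]
    abel
  calc frobSq (X - P * X) = trace ((1 - P) * X * ((1 - P) * X)ᵀ) := by
        rw [Matrix.sub_mul, Matrix.one_mul, frobSq_eq_trace]
    _ = trace ((1 - P)ᵀ * (1 - P) * (X * Xᵀ)) := by
        rw [transpose_mul, ← Matrix.mul_assoc, trace_mul_comm]
        simp only [Matrix.mul_assoc]
    _ = trace (X * Xᵀ) - trace (R * (X * Xᵀ) * Rᵀ) := by
        rw [hP, Matrix.sub_mul, trace_sub, Matrix.one_mul, trace_mul_cycle R]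

theorem stmt_3_general (d n d' : ℕ) (hd' : d' ≤ d)
    (X : Matrix (Fin d) (Fin n) ℝ) (A : Matrix (Fin d) (Fin d) ℝ)
    (σ : Fin d → ℝ) (v : Fin d → Fin d → ℝ)
    (hv : OrthonormalFamily v)
    (heig : ∀ i, ((n : ℝ)⁻¹ • (X * Xᵀ)).mulVec (v i) = σ i • v i)
    (σh : Fin d → ℝ) (vh : Fin d → Fin d → ℝ)
    (hvh : OrthonormalFamily vh)
    (heigh : ∀ i, ((n : ℝ)⁻¹ • (X * Xᵀ) + A).mulVec (vh i) = σh i • vh i)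
    (hσh : Antitone σh)
    (Vh : Matrix (Fin d) (Fin d') ℝ) (hVh : ∀ i j, Vh i j = vh (Fin.castLE hd' j) i)
    (Y : Matrix (Fin d) (Fin n) ℝ) (hY : Y = Vh * Vhᵀ * X) :
    (n : ℝ)⁻¹ * frobSq (X - Y)
      ≤ (∑ i ∈ Finset.univ.filter fun i : Fin d => d' ≤ i.val, σ i) + 2 * d' * opNorm A := by
  set M := (n : ℝ)⁻¹ • (X * Xᵀ)
  have he := Fin.castLE_injective hd'
  set R := of (vh ∘ Fin.castLE hd')
  set S := of (v ∘ Fin.castLE hd')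
  have hR : R * Rᵀ = 1 := (hvh.comp he).mul_transpose_eq_one
  have hS : S * Sᵀ = 1 := (hv.comp he).mul_transpose_eq_one
  have hVhR : Vh = Rᵀ := by ext i j; exact hVh i j
  have hresidual : (n : ℝ)⁻¹ * frobSq (X - Y) = trace M - trace (R * M * Rᵀ) := by
    rw [hY, hVhR, transpose_transpose, frobSq_sub_transpose_mul_mul hR, mul_sub, Matrix.mul_smul,
      Matrix.smul_mul, trace_smul, trace_smul, smul_eq_mul, smul_eq_mul]
  have htrace : trace M = ∑ i, σ i :=
    trace_eq_sum_of_mul_transpose_eq hv.mul_transpose_eq_one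
      (mul_transpose_of_eq_of_mulVec_eq_smul heig)
  have hnoisy : trace (R * (M + A) * Rᵀ) = ∑ j, σh (Fin.castLE hd' j) :=
    trace_mul_mul_transpose_eq_sum hR (mul_transpose_of_eq_of_mulVec_eq_smul fun j => heigh _)
  have hclean : trace (S * M * Sᵀ) = ∑ j, σ (Fin.castLE hd' j) :=
    trace_mul_mul_transpose_eq_sum hS (mul_transpose_of_eq_of_mulVec_eq_smul fun j => heig _)
  have hKyFan : trace (S * (M + A) * Sᵀ) ≤ ∑ j, σh (Fin.castLE hd' j) :=
    trace_mul_mul_transpose_le_sum_castLE hd' hvh.mul_transpose_eq_one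
      (mul_transpose_of_eq_of_mulVec_eq_smul heigh) hσh hS
  have hAR := abs_le.mp (abs_trace_mul_mul_transpose_le A hR)
  have hAS := abs_le.mp (abs_trace_mul_mul_transpose_le A hS)
  rw [hresidual, htrace, Fin.sum_eq_sum_castLE_add_sum_filter hd' σ]
  simp only [Matrix.mul_add, Matrix.add_mul, trace_add, Fintype.card_fin] at hnoisy hKyFan hAR hAS
  linarith

theorem stmt_3 (d n d' : ℕ) (hn : 1 ≤ n) (hd' : d' ≤ d)
    (X : Matrix (Fin d) (Fin n) ℝ) (A : Matrix (Fin d) (Fin d) ℝ) (hA : A.IsSymm)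
    (σ : Fin d → ℝ) (v : Fin d → Fin d → ℝ)
    (hv : OrthonormalFamily v)
    (heig : ∀ i, ((n : ℝ)⁻¹ • (X * Xᵀ)).mulVec (v i) = σ i • v i)
    (hσ : Antitone σ)
    (σh : Fin d → ℝ) (vh : Fin d → Fin d → ℝ)
    (hvh : OrthonormalFamily vh)
    (heigh : ∀ i, ((n : ℝ)⁻¹ • (X * Xᵀ) + A).mulVec (vh i) = σh i • vh i)
    (hσh : Antitone σh)
    (Vh : Matrix (Fin d) (Fin d') ℝ) (hVh : ∀ i j, Vh i j = vh (Fin.castLE hd' j) i)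
    (Y : Matrix (Fin d) (Fin n) ℝ) (hY : Y = Vh * Vhᵀ * X) :
    (n : ℝ)⁻¹ * frobSq (X - Y)
      ≤ (∑ i ∈ Finset.univ.filter fun i : Fin d => d' ≤ i.val, σ i) + 2 * d' * opNorm A :=
  stmt_3_general d n d' hd' X A σ v hv heig σh vh hvh heigh hσh Vh hVh Y hY
end
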